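/- Let x ∈ Δ_d↓ and ε > 0, and let B be any nonempty subset of B^∞_ε(x). Then the majorization infimum x^inf of B, defined componentwise by x^inf_k = inf{s_k(x') : x' ∈ B} − inf{s_{k−1}(x') : x' ∈ B}, satisfies ‖x^inf − x‖_∞ ≤ ε. -/

import Mathlib

/-! For every `b ∈ B`, `s_k(b) - s_{k-1}(b) = b_k` lies within `ε` of `x_k`. Two functions whose
pointwise difference stays within `ε` of a constant have infima (over the same nonempty set) whose
difference stays within `ε` of that constant, and `s_k` is bounded below by `0` on the simplex. -/

open Finset

/-- Partial sum of the first `k` components of `x`. -/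
def psum (d : ℕ) (x : Fin d → ℝ) (k : ℕ) : ℝ :=
  ∑ i ∈ Finset.univ.filter (fun i : Fin d => (i : ℕ) < k), x i

/-- The ordered probability simplex `Δ_d↓`. -/
def Simplex (d : ℕ) (x : Fin d → ℝ) : Prop :=
  (∀ i j : Fin d, i ≤ j → x j ≤ x i) ∧ (∀ i, 0 ≤ x i) ∧ ∑ i, x i = 1

/-- Majorization: all partial sums of `x` dominate those of `y`. -/
def Maj (d : ℕ) (x y : Fin d → ℝ) : Prop :=
  ∀ k : ℕ, psum d y k ≤ psum d x k

/-- ℓ∞ distance. -/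
noncomputable def dInf (d : ℕ) (x y : Fin d → ℝ) : ℝ := ⨆ i, |x i - y i|

/-- ℓ¹ distance. -/
def dOne (d : ℕ) (x y : Fin d → ℝ) : ℝ := ∑ i, |x i - y i|

section Infimum

variable {ι : Type*} {s : Set ι} {f g : ι → ℝ}

theorem csInf_image_add_le_csInf_image {a : ℝ} (hs : s.Nonempty) (hg : BddBelow (g '' s))
    (h : ∀ b ∈ s, g b + a ≤ f b) : sInf (g '' s) + a ≤ sInf (f '' s) :=
  le_csInf (hs.image f) <| by
    rintro _ ⟨b, hb, rfl⟩
    linarith [csInf_le hg (Set.mem_image_of_mem g hb), h b hb]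

theorem abs_csInf_image_sub_csInf_image_sub_le {c ε : ℝ} (hs : s.Nonempty)
    (hf : BddBelow (f '' s)) (hg : BddBelow (g '' s)) (h : ∀ b ∈ s, |f b - g b - c| ≤ ε) :
    |sInf (f '' s) - sInf (g '' s) - c| ≤ ε := by
  have lower := csInf_image_add_le_csInf_image (f := f) (a := c - ε) hs hg fun b hb => by
    linarith [(abs_le.1 (h b hb)).1]
  have upper := csInf_image_add_le_csInf_image (g := f) (f := g) (a := -c - ε) hs hf fun b hb => by
    linarith [(abs_le.1 (h b hb)).2]
  rw [abs_le]
  constructor <;> linarith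

end Infimum

theorem psum_val_succ {d : ℕ} (b : Fin d → ℝ) (i : Fin d) :
    psum d b (i + 1) = psum d b i + b i := by
  have hfilter : univ.filter (fun j : Fin d => (j : ℕ) < i + 1)
      = insert i (univ.filter fun j : Fin d => (j : ℕ) < i) := by
    ext j
    simp only [mem_filter, mem_univ, true_and, mem_insert, Fin.ext_iff]
    omega
  rw [psum, hfilter, sum_insert (by simp), add_comm, psum]

theorem psum_nonneg {d : ℕ} {b : Fin d → ℝ} (hb : ∀ i, 0 ≤ b i) (k : ℕ) : 0 ≤ psum d b k :=
  sum_nonneg fun i _ => hb i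

theorem abs_sub_le_dInf {d : ℕ} (b x : Fin d → ℝ) (i : Fin d) : |b i - x i| ≤ dInf d b x :=
  le_ciSup (Set.finite_range fun j => |b j - x j|).bddAbove i

theorem inf_of_subset_in_linf_ball (d : ℕ) (x : Fin d → ℝ) (ε : ℝ)
    (B : Set (Fin d → ℝ)) (hBne : B.Nonempty)
    (hB : ∀ b ∈ B, Simplex d b ∧ dInf d b x ≤ ε) :
    ∀ i : Fin d,
      |(sInf {s : ℝ | ∃ b ∈ B, s = psum d b ((i : ℕ) + 1)} -
        sInf {s : ℝ | ∃ b ∈ B, s = psum d b (i : ℕ)}) - x i| ≤ ε := by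
  intro i
  have image_eq (k : ℕ) : {s : ℝ | ∃ b ∈ B, s = psum d b k} = (psum d · k) '' B := by
    ext
    simp [eq_comm]
  have bdd (k : ℕ) : BddBelow ((psum d · k) '' B) :=
    ⟨0, by rintro _ ⟨b, hb, rfl⟩; exact psum_nonneg (hB b hb).1.2.1 k⟩
  rw [image_eq, image_eq]
  refine abs_csInf_image_sub_csInf_image_sub_le hBne (bdd _) (bdd _) fun b hb => ?_
  rw [psum_val_succ, add_sub_cancel_left]
  exact (abs_sub_le_dInf b x i).trans (hB b hb).2
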